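/- Let A be a finite-dimensional graded connected Hopf algebra over a field F and B ⊆ A a Hopf subalgebra. Then A is free as a left B-module. -/

import Mathlib

/-!
Let `B⁺ = B ∩ ker ε`, lift a basis of `A//B = A / B⁺A` to a family `c` in `A`, and show that
`c` is a `B`-basis of `A`. Connectedness puts `ker ε` inside the positive-degree part, which is
nilpotent because `A` is finite dimensional; so `ker ε` and `B⁺` are nilpotent.

Spanning is Nakayama's argument: `A = Bc + B⁺A` and `B⁺` is nilpotent. For independence, let
`φᵢ` be the functionals dual to the basis of `A//B`. They satisfy `φᵢ(b y) = ε(b) φᵢ(y)` for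
`b ∈ B`, so, as `Δ(B) ⊆ B ⊗ B`, the map `x ↦ x₍₁₎ φᵢ(x₍₂₎)` is left `B`-linear, and it agrees
with `φᵢ` modulo `ker ε`. Applied to a relation `∑ gⱼ cⱼ = 0` it gives `gᵢ ∈ X · ker ε`
whenever all `gⱼ ∈ X`; iterating pushes the coefficients into `A · (ker ε)^N = 0`.
-/

open scoped TensorProduct

namespace MilnorMoore

section Graded

variable {R A : Type*} [CommSemiring R] [Semiring A] [Algebra R A] (𝒜 : ℕ → Submodule R A)

def degreeGE (t : ℕ) : Submodule R A := ⨆ k ≥ t, 𝒜 k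

variable {𝒜}

lemma le_degreeGE {t k : ℕ} (h : t ≤ k) : 𝒜 k ≤ degreeGE 𝒜 t :=
  le_iSup₂_of_le (f := fun k (_ : k ≥ t) => 𝒜 k) k h le_rfl

lemma degreeGE_mul_le [SetLike.GradedMul 𝒜] (p q : ℕ) :
    degreeGE 𝒜 p * degreeGE 𝒜 q ≤ degreeGE 𝒜 (p + q) := by
  simp only [degreeGE, Submodule.iSup_mul, Submodule.mul_iSup, iSup_le_iff]
  intro i hi j hj
  exact (Submodule.mul_le.mpr fun _ ha _ hb => SetLike.GradedMul.mul_mem ha hb).trans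
    (le_degreeGE (by omega))

lemma degreeGE_one_pow_le [SetLike.GradedMonoid 𝒜] : ∀ t : ℕ, degreeGE 𝒜 1 ^ t ≤ degreeGE 𝒜 t
  | 0 => Submodule.one_le.mpr (le_degreeGE le_rfl SetLike.GradedOne.one_mem)
  | t + 1 => by
    rw [pow_succ]
    exact (mul_le_mul_left (degreeGE_one_pow_le t) _).trans (degreeGE_mul_le t 1)

lemma exists_degreeGE_eq_bot [IsNoetherian R A] [DirectSum.Decomposition 𝒜] :
    ∃ N, degreeGE 𝒜 N = ⊥ := by
  classical
  obtain ⟨N, hN⟩ := (Submodule.finite_ne_bot_of_iSupIndep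
    (DirectSum.Decomposition.isInternal 𝒜).submodule_iSupIndep).bddAbove
  refine ⟨N + 1, iSup₂_eq_bot.mpr fun k hk => ?_⟩
  by_contra h
  exact absurd (hN h) (by omega)

lemma sup_degreeGE_one_eq_top [DirectSum.Decomposition 𝒜] : 𝒜 0 ⊔ degreeGE 𝒜 1 = ⊤ := by
  classical
  rw [eq_top_iff, ← (DirectSum.Decomposition.isInternal 𝒜).submodule_iSup_eq_top]
  refine iSup_le fun k => ?_
  rcases k with _ | k
  · exact le_sup_left
  · exact le_sup_of_le_right (le_degreeGE (by omega))

lemma ker_le_degreeGE_one [GradedAlgebra 𝒜] [IsReduced R] (hconn : 𝒜 0 = 1) {N : ℕ}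
    (hN : degreeGE 𝒜 N = ⊥) (f : A →ₐ[R] R) : LinearMap.ker f.toLinearMap ≤ degreeGE 𝒜 1 := by
  intro a ha
  have hmem : a ∈ 𝒜 0 ⊔ degreeGE 𝒜 1 := sup_degreeGE_one_eq_top (𝒜 := 𝒜) ▸ Submodule.mem_top
  obtain ⟨_, ⟨r, rfl⟩, p, hp, rfl⟩ := Submodule.mem_sup.mp (hconn ▸ hmem)
  have hp_nil : IsNilpotent p := by
    refine ⟨N, ?_⟩
    have := degreeGE_one_pow_le N (Submodule.pow_mem_pow _ hp N)
    rwa [hN, Submodule.mem_bot] at this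
  have hfp : f p = 0 := (hp_nil.map f).eq_zero
  have hr : r = 0 := by simpa [hfp] using ha
  simpa [hr] using hp

lemma exists_pow_ker_eq_bot [GradedAlgebra 𝒜] [IsNoetherian R A] [IsReduced R]
    (hconn : 𝒜 0 = 1) (f : A →ₐ[R] R) : ∃ N, LinearMap.ker f.toLinearMap ^ N = ⊥ := by
  obtain ⟨N, hN⟩ := exists_degreeGE_eq_bot (𝒜 := 𝒜)
  refine ⟨N, eq_bot_iff.mpr ?_⟩
  calc LinearMap.ker f.toLinearMap ^ N ≤ degreeGE 𝒜 1 ^ N :=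
        pow_le_pow_left' (ker_le_degreeGE_one hconn hN f) N
    _ ≤ degreeGE 𝒜 N := degreeGE_one_pow_le N
    _ = ⊥ := hN

end Graded

lemma le_of_le_sup_mul_of_pow_eq_bot {R A : Type*} [CommSemiring R] [Semiring A] [Algebra R A]
    {K M L : Submodule R A} (hKM : K * M ≤ M) (hL : L ≤ M ⊔ K * L) {n : ℕ} (hK : K ^ n = ⊥) :
    L ≤ M := by
  have hKpow : ∀ t, K ^ t * M ≤ M := by
    intro t
    induction t with
    | zero => simp
    | succ t ih =>
      rw [pow_succ, mul_assoc]
      exact (mul_le_mul_right hKM _).trans ih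
  have hstep : ∀ t, L ≤ M ⊔ K ^ t * L := by
    intro t
    induction t with
    | zero => simp
    | succ t ih =>
      calc L ≤ M ⊔ K ^ t * (M ⊔ K * L) := ih.trans (sup_le_sup_left (mul_le_mul_right hL _) _)
        _ = M ⊔ K ^ t * M ⊔ K ^ (t + 1) * L := by
          rw [Submodule.mul_sup, pow_succ, mul_assoc, sup_assoc]
        _ ≤ M ⊔ K ^ (t + 1) * L := by rw [sup_eq_left.mpr (hKpow t)]
  simpa [hK] using hstep n

section Hit

variable {R A : Type*} [CommSemiring R] [AddCommMonoid A] [Module R A] [Coalgebra R A]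

/-- The hit action `φ ⇀ x = x₍₁₎ φ(x₍₂₎)` of the dual on a coalgebra. -/
def hit (φ : A →ₗ[R] R) : A →ₗ[R] A :=
  TensorProduct.rid R A ∘ₗ φ.lTensor A ∘ₗ Coalgebra.comul

lemma counit_hit (φ : A →ₗ[R] R) (x : A) : Coalgebra.counit (hit φ x) = φ x := by
  have key : ∀ z : A ⊗[R] A, Coalgebra.counit (TensorProduct.rid R A (φ.lTensor A z)) =
      φ (TensorProduct.lid R A (Coalgebra.counit.rTensor A z)) := by
    intro z
    induction z using TensorProduct.induction_on with
    | zero => simp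
    | tmul u v => simp [mul_comm]
    | add z w hz hw => simp [hz, hw]
  simp [hit, key, Coalgebra.rTensor_counit_comul]

end Hit

section Subalgebra

variable {R A : Type*} [CommRing R] [Ring A] [Bialgebra R A] (B : Subalgebra R A)

/-- `B⁺ = B ∩ ker ε`; the quotient `A//B = A / B⁺A` appears below as
`A ⧸ augmentationIdeal B * ⊤`. -/
def augmentationIdeal : Submodule R A :=
  Subalgebra.toSubmodule B ⊓ LinearMap.ker (Coalgebra.counit (R := R) (A := A))

variable {B}

lemma apply_mul_eq_counit_mul {φ : A →ₗ[R] R} (hφ : augmentationIdeal B * ⊤ ≤ LinearMap.ker φ)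
    {b : A} (hb : b ∈ B) (y : A) : φ (b * y) = Coalgebra.counit b * φ y := by
  have hmem : (b - algebraMap R A (Coalgebra.counit b)) * y ∈ augmentationIdeal B * ⊤ :=
    Submodule.mul_mem_mul ⟨sub_mem hb (B.algebraMap_mem _), by simp⟩ trivial
  have hker := hφ hmem
  simp only [LinearMap.mem_ker, sub_mul, Algebra.algebraMap_eq_smul_one, smul_mul_assoc, one_mul,
    map_sub, map_smul, smul_eq_mul] at hker
  exact sub_eq_zero.mp hker

lemma hit_mul {φ : A →ₗ[R] R} (hφ : augmentationIdeal B * ⊤ ≤ LinearMap.ker φ) {b : A}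
    (hb : Coalgebra.comul (R := R) b ∈
      LinearMap.range (TensorProduct.map B.val.toLinearMap B.val.toLinearMap)) (x : A) :
    hit φ (b * x) = b * hit φ x := by
  set Ψ : (A →ₗ[R] R) → A ⊗[R] A →ₗ[R] A := fun ψ => TensorProduct.rid R A ∘ₗ ψ.lTensor A
  have key : ∀ (w : B ⊗[R] B) (z : A ⊗[R] A),
      Ψ φ (TensorProduct.map B.val.toLinearMap B.val.toLinearMap w * z) =
        Ψ Coalgebra.counit (TensorProduct.map B.val.toLinearMap B.val.toLinearMap w) * Ψ φ z := by
    intro w z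
    induction w using TensorProduct.induction_on with
    | zero => simp
    | add w w' hw hw' => simp only [map_add, add_mul, hw, hw']
    | tmul u v =>
      induction z using TensorProduct.induction_on with
      | zero => simp
      | add z z' hz hz' => simp only [map_add, mul_add, hz, hz']
      | tmul x y =>
        simp [Ψ, apply_mul_eq_counit_mul hφ v.2, mul_smul, smul_comm (φ y)]
  obtain ⟨w, hw⟩ := hb
  have hcounit : Ψ Coalgebra.counit (Coalgebra.comul b) = b := by
    simp [Ψ, Coalgebra.lTensor_counit_comul]
  show Ψ φ (Coalgebra.comul (b * x)) = b * Ψ φ (Coalgebra.comul x)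
  rw [Bialgebra.comul_mul, ← hw, key, hw, hcounit]

lemma hit_sub_algebraMap_mem_ker (φ : A →ₗ[R] R) (x : A) :
    hit φ x - algebraMap R A (φ x) ∈ LinearMap.ker (Coalgebra.counit (R := R) (A := A)) := by
  simp [counit_hit]

section Lift

variable {ι : Type*} (e : Module.Basis ι R (A ⧸ augmentationIdeal B * ⊤)) {c : ι → A}
  (hc : ∀ i, (augmentationIdeal B * ⊤).mkQ (c i) = e i)
include hc

lemma mem_mul_ker_of_sum_smul_eq_zero
    (hcomul : ∀ b ∈ B, Coalgebra.comul (R := R) b ∈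
      LinearMap.range (TensorProduct.map B.val.toLinearMap B.val.toLinearMap))
    {s : Finset ι} {g : ι → B} (hg : ∑ j ∈ s, g j • c j = 0) {X : Submodule R A}
    (hX : ∀ j ∈ s, (g j : A) ∈ X) {i : ι} (hi : i ∈ s) :
    (g i : A) ∈ X * LinearMap.ker (Coalgebra.counit (R := R) (A := A)) := by
  classical
  set φ := e.coord i ∘ₗ (augmentationIdeal B * ⊤).mkQ
  have hφ : augmentationIdeal B * ⊤ ≤ LinearMap.ker φ := by
    rw [← Submodule.ker_mkQ (augmentationIdeal B * ⊤)]
    exact LinearMap.ker_le_ker_comp _ _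
  have hφc : ∀ j, φ (c j) = if j = i then 1 else 0 := by
    intro j
    simp [φ, hc, Finsupp.single_apply]
  have hdiag : ∑ j ∈ s, (g j : A) * algebraMap R A (φ (c j)) = g i := by
    simp [hφc, hi]
  have hsum : ∑ j ∈ s, (g j : A) * hit φ (c j) = 0 := by
    simpa [Subalgebra.smul_def, hit_mul hφ (hcomul _ (g _).2)] using congrArg (hit φ) hg
  have hgi : (g i : A) = -∑ j ∈ s, (g j : A) * (hit φ (c j) - algebraMap R A (φ (c j))) := by
    simp only [mul_sub, Finset.sum_sub_distrib, hsum, hdiag, zero_sub, neg_neg]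
  rw [hgi]
  exact neg_mem (Submodule.sum_mem _ fun j hj =>
    Submodule.mul_mem_mul (hX j hj) (hit_sub_algebraMap_mem_ker φ (c j)))

lemma linearIndependent_of_mkQ_eq_basis
    (hcomul : ∀ b ∈ B, Coalgebra.comul (R := R) b ∈
      LinearMap.range (TensorProduct.map B.val.toLinearMap B.val.toLinearMap))
    {N : ℕ} (hN : LinearMap.ker (Coalgebra.counit (R := R) (A := A)) ^ N = ⊥) :
    LinearIndependent B c := by
  rw [linearIndependent_iff']
  intro s g hg
  have hpow : ∀ t, ∀ j ∈ s, (g j : A) ∈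
      ⊤ * LinearMap.ker (Coalgebra.counit (R := R) (A := A)) ^ t := by
    intro t
    induction t with
    | zero => simp
    | succ t ih =>
      rw [pow_succ, ← mul_assoc]
      exact fun j hj => mem_mul_ker_of_sum_smul_eq_zero e hc hcomul hg ih hj
  intro j hj
  simpa [hN] using hpow N j hj

lemma span_eq_top_of_mkQ_eq_basis
    {N : ℕ} (hN : LinearMap.ker (Coalgebra.counit (R := R) (A := A)) ^ N = ⊥) :
    Submodule.span B (Set.range c) = ⊤ := by
  set M := (Submodule.span B (Set.range c)).restrictScalars R
  have hKM : augmentationIdeal B * M ≤ M := Submodule.mul_le.mpr fun k hk m hm =>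
    (Submodule.span B (Set.range c)).smul_mem (⟨k, hk.1⟩ : B) hm
  have hspan : Submodule.span R (Set.range c) ⊔ augmentationIdeal B * ⊤ = ⊤ := by
    rw [sup_comm, ← Submodule.map_mkQ_eq_top, Submodule.map_span, ← Set.range_comp]
    simp [Function.comp_def, hc, e.span_eq]
  have hcover : ⊤ ≤ M ⊔ augmentationIdeal B * ⊤ :=
    hspan.ge.trans (sup_le_sup_right (Submodule.span_le_restrictScalars R B _) _)
  have hK : augmentationIdeal B ^ N = ⊥ :=
    eq_bot_iff.mpr ((pow_le_pow_left' (inf_le_right : augmentationIdeal B ≤ _) N).trans hN.le)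
  have htop := le_of_le_sup_mul_of_pow_eq_bot hKM hcover hK
  exact eq_top_iff.mpr fun a _ => htop trivial

end Lift

theorem free_of_pow_ker_counit_eq_bot [Module.Free R (A ⧸ augmentationIdeal B * ⊤)]
    (hcomul : ∀ b ∈ B, Coalgebra.comul (R := R) b ∈
      LinearMap.range (TensorProduct.map B.val.toLinearMap B.val.toLinearMap))
    {N : ℕ} (hN : LinearMap.ker (Coalgebra.counit (R := R) (A := A)) ^ N = ⊥) :
    Module.Free B A := by
  set e := Module.Free.chooseBasis R (A ⧸ augmentationIdeal B * ⊤)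
  set c := fun i => Function.surjInv (augmentationIdeal B * ⊤).mkQ_surjective (e i)
  have hc : ∀ i, (augmentationIdeal B * ⊤).mkQ (c i) = e i := fun i => Function.surjInv_eq _ _
  exact Module.Free.of_basis (Module.Basis.mk (linearIndependent_of_mkQ_eq_basis e hc hcomul hN)
    (span_eq_top_of_mkQ_eq_basis e hc hN).ge)

end Subalgebra

end MilnorMoore

theorem milnor_moore_freeness_general
    (F : Type) [Field F]
    (A : Type) [Ring A] [HopfAlgebra F A] [FiniteDimensional F A]
    (𝒜 : ℕ → Submodule F A) [GradedAlgebra 𝒜]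
    (hconn : 𝒜 0 = 1)
    (B : Subalgebra F A)
    (hcomul : ∀ b ∈ B, Coalgebra.comul (R := F) b ∈
      LinearMap.range (TensorProduct.map B.val.toLinearMap B.val.toLinearMap)) :
    Module.Free B A := by
  obtain ⟨N, hN⟩ := MilnorMoore.exists_pow_ker_eq_bot hconn (Bialgebra.counitAlgHom F A)
  exact MilnorMoore.free_of_pow_ker_counit_eq_bot hcomul hN

/-- **Milnor–Moore freeness theorem.**  Let `A` be a finite-dimensional graded
connected Hopf algebra over a field `F` (grading `𝒜` with `𝒜 0 = F·1`) and let
`B ⊆ A` be a Hopf subalgebra (a graded subalgebra closed under the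
comultiplication and the antipode).  Then `A` is free as a left `B`-module. -/
theorem milnor_moore_freeness
    (F : Type) [Field F]
    (A : Type) [Ring A] [HopfAlgebra F A] [FiniteDimensional F A]
    (𝒜 : ℕ → Submodule F A) [GradedAlgebra 𝒜]
    (hconn : 𝒜 0 = 1)
    (B : Subalgebra F A)
    (hcomul : ∀ b ∈ B, Coalgebra.comul (R := F) b ∈
      LinearMap.range (TensorProduct.map B.val.toLinearMap B.val.toLinearMap))
    (hantipode : ∀ b ∈ B, HopfAlgebra.antipode (R := F) b ∈ B)
    (hgraded : ∀ b ∈ B, ∀ n, (DirectSum.decompose 𝒜 b n : A) ∈ B) :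
    Module.Free B A :=
  milnor_moore_freeness_general F A 𝒜 hconn B hcomul
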